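/- arXiv:2104.04021 — 2 statements merged into one kernel-verified Lean document; each statement's English description precedes it below -/
import Mathlib

section
/- Let A, B, C be categories with zero objects, and suppose given adjunctions i ⊣ R (with i : A ⥤ B, R : B ⥤ A) and L ⊣ j (with L : B ⥤ C, j : C ⥤ B). Then L(i a) is a zero object of C for every object a of A if and only if R(j c) is a zero object of A for every object c of C. -/
open CategoryTheory CategoryTheory.Limits

/-- Given adjunctions `i ⊣ R` and `L ⊣ j`, all composites `L (i a)` are zero objects iff
all composites `R (j c)` are zero objects. -/
theorem stmt9 {A : Type u₁} {B : Type u₂} {C : Type u₃}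
    [Category.{v₁} A] [Category.{v₂} B] [Category.{v₃} C]
    [HasZeroObject A] [HasZeroObject B] [HasZeroObject C]
    (i : A ⥤ B) (R : B ⥤ A) (adj₁ : i ⊣ R)
    (L : B ⥤ C) (j : C ⥤ B) (adj₂ : L ⊣ j) :
    (∀ a : A, IsZero (L.obj (i.obj a))) ↔ (∀ c : C, IsZero (R.obj (j.obj c))) := by
  constructor
  · intro h c
    have hu : ∀ a : A, Unique (a ⟶ R.obj (j.obj c)) := fun a => by
      haveI h1 : Unique (L.obj (i.obj a) ⟶ c) := ((h a).unique_to c).some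
      exact ((adj₂.homEquiv (i.obj a) c).trans (adj₁.homEquiv a (j.obj c))).symm.unique
    have t : IsTerminal (R.obj (j.obj c)) :=
      IsTerminal.ofUniqueHom (fun a => (hu a).default)
        (fun a m => (hu a).uniq m ▸ rfl)
    exact (isZero_zero A).of_iso (t.uniqueUpToIso (isZero_zero A).isTerminal)
  · intro h a
    have hu : ∀ c : C, Unique (L.obj (i.obj a) ⟶ c) := fun c => by
      haveI h1 : Unique (a ⟶ R.obj (j.obj c)) := ((h c).unique_from a).some
      exact ((adj₂.homEquiv (i.obj a) c).trans (adj₁.homEquiv a (j.obj c))).unique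
    have t : IsInitial (L.obj (i.obj a)) :=
      IsInitial.ofUniqueHom (fun c => (hu c).default)
        (fun c m => (hu c).uniq m ▸ rfl)
    exact (isZero_zero C).of_iso (t.uniqueUpToIso (isZero_zero C).isInitial)
end

section
/- Let C be a category and let X be an augmented simplicial object in C admitting an extra degeneracy. Then the augmentation exhibits the augmented object as a colimit: the point of the augmentation is the colimit of the underlying simplicial object of X. -/
open CategoryTheory CategoryTheory.Limits

open SimplicialObject.Augmented Opposite Simplicial in
theorem stmt12_aux {C : Type u} [Category.{v} C] (X : SimplicialObject.Augmented C)
    (ed : SimplicialObject.Augmented.ExtraDegeneracy X) (c : Cocone X.left) (n : ℕ) :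
    X.hom.app (op ⦋n⦌) ≫ ed.s' ≫ c.ι.app (op ⦋0⦌) = c.ι.app (op ⦋n⦌) := by
  induction n with
  | zero =>
      rw [← Category.assoc, ← ed.s₀_comp_δ₁, Category.assoc]
      have h1 : X.left.map (SimplexCategory.δ (1 : Fin 2)).op ≫ c.ι.app (op ⦋0⦌)
          = c.ι.app (op ⦋0 + 1⦌) := by
        simpa using c.ι.naturality (SimplexCategory.δ (1 : Fin 2)).op
      have h0 : X.left.map (SimplexCategory.δ (0 : Fin 2)).op ≫ c.ι.app (op ⦋0⦌)
          = c.ι.app (op ⦋0 + 1⦌) := by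
        simpa using c.ι.naturality (SimplexCategory.δ (0 : Fin 2)).op
      simp only [SimplicialObject.δ]
      rw [h1, ← h0, ← Category.assoc]
      have := ed.s_comp_δ₀ 0
      simp only [SimplicialObject.δ] at this
      rw [this]
      simp
  | succ n ih =>
      have hX : X.left.map (SimplexCategory.δ (0 : Fin (n + 2))).op ≫ X.hom.app (op ⦋n⦌)
          = X.hom.app (op ⦋n + 1⦌) := by
        simpa using X.hom.naturality (SimplexCategory.δ (0 : Fin (n + 2))).op
      have hc : X.left.map (SimplexCategory.δ (0 : Fin (n + 2))).op ≫ c.ι.app (op ⦋n⦌)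
          = c.ι.app (op ⦋n + 1⦌) := by
        simpa using c.ι.naturality (SimplexCategory.δ (0 : Fin (n + 2))).op
      rw [← hX, Category.assoc, ih, hc]

/-- An augmented simplicial object admitting an extra degeneracy exhibits its augmentation
point as the colimit of the underlying simplicial object. -/
theorem stmt12 {C : Type u} [Category.{v} C] (X : SimplicialObject.Augmented C)
    (ed : SimplicialObject.Augmented.ExtraDegeneracy X) :
    Nonempty (IsColimit (Cocone.mk X.right X.hom : Cocone X.left)) := by
  refine ⟨⟨fun c => ed.s' ≫ c.ι.app (Opposite.op (SimplexCategory.mk 0)), ?_, ?_⟩⟩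
  · intro c Δ
    induction Δ using Opposite.rec with
    | op Δ =>
      rw [← SimplexCategory.mk_len Δ]
      exact stmt12_aux X ed c Δ.len
  · intro c m hm
    have h := hm (Opposite.op (SimplexCategory.mk 0))
    dsimp at h ⊢
    rw [← h, ← Category.assoc, ed.s'_comp_ε]; simp
end
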